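/- For every positive integer r, every g ∈ {0,1}, and every complex number z: A_{r,g}(1 − z) = Σ_{m=0}^{r} C(r−1/4, r−m)·C(r−g+1/4, m)·z^m, and B_{r,g}(1 − z) = Σ_{m=0}^{r−g} C(r−g+1/4, r−g−m)·C(r−1/4, m)·z^m. -/

import Mathlib

/-- The generalized binomial coefficient `C(α, m) = α(α-1)⋯(α-m+1)/m!`. -/
noncomputable def genChoose (α : ℝ) (m : ℕ) : ℝ :=
  (∏ i ∈ Finset.range m, (α - i)) / m.factorial

/-- The polynomial `A_{r,g}(z) = Σ_{m=0}^{r} C(r-g+1/4, m) C(2r-g-m, r-g) (-z)^m`. -/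
noncomputable def Apoly (r g : ℕ) (z : ℂ) : ℂ :=
  ∑ m ∈ Finset.range (r + 1),
    ((genChoose ((r : ℝ) - g + 1/4) m *
      genChoose (2 * (r : ℝ) - g - m) (r - g) : ℝ) : ℂ) * (-z) ^ m

/-- The polynomial `B_{r,g}(z) = Σ_{m=0}^{r-g} C(r-1/4, m) C(2r-g-m, r) (-z)^m`. -/
noncomputable def Bpoly (r g : ℕ) (z : ℂ) : ℂ :=
  ∑ m ∈ Finset.range (r - g + 1),
    ((genChoose ((r : ℝ) - 1/4) m *
      genChoose (2 * (r : ℝ) - g - m) r : ℝ) : ℂ) * (-z) ^ m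

/-! Writing `1 - z = -(z - 1)` and expanding `(z - 1)^m` binomially, the coefficient of `z^k`
becomes `Σ_m C(a,m) C(c-m,s-m) (-1)^(m-k) C(m,k)`. Trinomial revision
`C(a,m) C(m,k) = C(a,k) C(a-k,m-k)` turns this into `C(a,k)` times an alternating
Chu–Vandermonde sum `Σ_j (-1)^j C(b,j) C(c'-j,n-j) = C(c'-b,n)`, which is the ordinary
Vandermonde identity after negating the upper index of `C(c'-j,n-j)`. The factor
`C(2r-g-m, ·)` of `A_{r,g}` and `B_{r,g}` has a natural upper index, so it can be rewritten as
`C(c-m, s-m)` by symmetry, and the upper indices `c - a` come out as `r ∓ 1/4`. -/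

open Finset

theorem sum_range_mul_sub_one_pow {R : Type*} [CommRing R] (f : ℕ → R) (n : ℕ) (z : R) :
    ∑ m ∈ range (n + 1), f m * (z - 1) ^ m =
      ∑ k ∈ range (n + 1),
        (∑ m ∈ range (n + 1), f m * ((-1) ^ (m - k) * m.choose k)) * z ^ k := by
  have hpow : ∀ m ∈ range (n + 1),
      (z - 1) ^ m = ∑ k ∈ range (n + 1), z ^ k * (-1) ^ (m - k) * m.choose k := by
    intro m hm
    rw [sub_eq_add_neg, add_pow]
    refine sum_subset (range_subset_range.mpr (mem_range.mp hm)) fun k _ hk => ?_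
    rw [Nat.choose_eq_zero_of_lt (by simpa using hk), Nat.cast_zero, mul_zero]
  rw [sum_congr rfl fun m hm => by rw [hpow m hm, mul_sum], sum_comm]
  refine sum_congr rfl fun k _ => ?_
  rw [sum_mul]
  exact sum_congr rfl fun m _ => by ring

namespace Ring

variable {R : Type*} [CommRing R] [BinomialRing R]

theorem choose_neg_eq_neg_one_pow_mul (r : R) (n : ℕ) :
    choose (-r) n = (-1) ^ n * choose (r + n - 1) n := by
  rw [choose_neg, Units.smul_def, zsmul_eq_mul, Int.coe_negOnePow]
  rfl

theorem sum_range_neg_one_pow_mul_choose_mul_choose_sub (b c : R) (n : ℕ) :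
    ∑ j ∈ range (n + 1), (-1) ^ j * choose b j * choose (c - j) (n - j) = choose (c - b) n := by
  have hterm : ∀ j ∈ range (n + 1), (-1) ^ j * choose b j * choose (c - j) (n - j) =
      (-1) ^ n * (choose b j * choose (n - c - 1) (n - j)) := by
    intro j hj
    have hjn : j ≤ n := Nat.lt_succ_iff.mp (mem_range.mp hj)
    rw [show c - j = -(j - c) by ring, choose_neg_eq_neg_one_pow_mul, Nat.cast_sub hjn,
      show (j : R) - c + (n - j) - 1 = n - c - 1 by ring, ← pow_mul_pow_sub (-1 : R) hjn]
    ring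
  rw [sum_congr rfl hterm, ← mul_sum, ← Nat.sum_antidiagonal_eq_sum_range_succ
    (fun i j => choose b i * choose ((n : R) - c - 1) j), ← add_choose_eq n (Commute.all _ _),
    show b + (n - c - 1) = -(c - b - n + 1) by ring, choose_neg_eq_neg_one_pow_mul,
    show c - b - n + 1 + n - 1 = c - b by ring, ← mul_assoc, ← pow_add,
    Even.neg_one_pow ⟨n, rfl⟩, one_mul]

theorem sum_range_choose_mul_choose_sub_mul_neg_one_pow_mul_choose (a c : R) {k s : ℕ}
    (hks : k ≤ s) :
    ∑ m ∈ range (s + 1), choose a m * choose (c - m) (s - m) * ((-1) ^ (m - k) * m.choose k) =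
      choose (c - a) (s - k) * choose a k := by
  rw [show s + 1 = k + (s - k + 1) by omega, sum_range_add,
    sum_eq_zero fun m hm => by simp [Nat.choose_eq_zero_of_lt (mem_range.mp hm)], zero_add]
  have hterm : ∀ j ∈ range (s - k + 1),
      choose a (k + j) * choose (c - ↑(k + j)) (s - (k + j)) *
        ((-1) ^ (k + j - k) * ((k + j).choose k : R)) =
      choose a k * ((-1) ^ j * choose (a - k) j * choose (c - k - j) (s - k - j)) := by
    intro j _
    have htri := choose_smul_choose a (Nat.le_add_right k j)
    rw [nsmul_eq_mul, Nat.add_sub_cancel_left] at htri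
    rw [Nat.add_sub_cancel_left, Nat.cast_add, ← sub_sub, ← Nat.sub_sub]
    linear_combination ((-1) ^ j * choose (c - k - j) (s - k - j)) * htri
  rw [sum_congr rfl hterm, ← mul_sum, sum_range_neg_one_pow_mul_choose_mul_choose_sub,
    show c - k - (a - k) = c - a by ring, mul_comm]

theorem sum_range_choose_mul_choose_sub_mul_sub_one_pow (a c z : R) (s : ℕ) :
    ∑ m ∈ range (s + 1), choose a m * choose (c - m) (s - m) * (z - 1) ^ m =
      ∑ k ∈ range (s + 1), choose (c - a) (s - k) * choose a k * z ^ k := by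
  rw [_root_.sum_range_mul_sub_one_pow]
  exact sum_congr rfl fun k hk => by
    rw [sum_range_choose_mul_choose_sub_mul_neg_one_pow_mul_choose a c
      (Nat.lt_succ_iff.mp (mem_range.mp hk))]

end Ring

theorem genChoose_eq_choose (α : ℝ) (m : ℕ) : genChoose α m = Ring.choose α m := by
  rw [Ring.choose_eq_smul, genChoose, ← descPochhammer_eval_eq_prod_range,
    ← Polynomial.aeval_eq_smeval, Polynomial.aeval_def, Polynomial.eval₂_eq_eval_map,
    descPochhammer_map, smul_eq_mul, div_eq_inv_mul]

theorem ofReal_genChoose (α : ℝ) (m : ℕ) :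
    (genChoose α m : ℂ) = Ring.choose (α : ℂ) m := by
  rw [genChoose_eq_choose, ← Complex.ofRealHom_eq_coe, Ring.map_choose]
  rfl

theorem ofReal_genChoose_of_eq_add {x : ℝ} {p q : ℕ} (hx : x = p + q) :
    (genChoose x p : ℂ) = Ring.choose (x : ℂ) q := by
  have hx' : x = ((p + q : ℕ) : ℝ) := by exact_mod_cast hx
  rw [ofReal_genChoose, hx', Complex.ofReal_natCast, Ring.choose_natCast, Ring.choose_natCast,
    Nat.choose_symm_add]

theorem sum_range_genChoose_mul_genChoose_mul_neg_one_sub_pow {α β c : ℝ} {s t : ℕ}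
    (hc : c = s + t) (hαβ : α + β = c) (z : ℂ) :
    ∑ m ∈ range (s + 1), ((genChoose α m * genChoose (c - m) t : ℝ) : ℂ) * (-(1 - z)) ^ m =
      ∑ m ∈ range (s + 1), ((genChoose β (s - m) * genChoose α m : ℝ) : ℂ) * z ^ m := by
  have hterm : ∀ m ∈ range (s + 1),
      ((genChoose α m * genChoose (c - m) t : ℝ) : ℂ) * (-(1 - z)) ^ m =
        Ring.choose (α : ℂ) m * Ring.choose ((c : ℂ) - m) (s - m) * (z - 1) ^ m := by
    intro m hm
    have hcm : c - m = t + (s - m : ℕ) := by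
      rw [Nat.cast_sub (Nat.lt_succ_iff.mp (mem_range.mp hm)), hc]
      ring
    push_cast
    rw [ofReal_genChoose, ofReal_genChoose_of_eq_add hcm, neg_sub]
    push_cast
    rfl
  have hβ : (β : ℂ) = c - α := by
    rw [← hαβ]
    push_cast
    ring
  rw [sum_congr rfl hterm, Ring.sum_range_choose_mul_choose_sub_mul_sub_one_pow, ← hβ]
  push_cast [ofReal_genChoose]
  rfl

/-- Expansions of `A_{r,g}` and `B_{r,g}` around `z = 1`:
`A_{r,g}(1-z) = Σ_{m=0}^{r} C(r-1/4, r-m) C(r-g+1/4, m) z^m` and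
`B_{r,g}(1-z) = Σ_{m=0}^{r-g} C(r-g+1/4, r-g-m) C(r-1/4, m) z^m`. -/
theorem Apoly_Bpoly_at_one_sub (r : ℕ) (hr : 0 < r) (g : ℕ) (hg : g = 0 ∨ g = 1) (z : ℂ) :
    Apoly r g (1 - z) = ∑ m ∈ Finset.range (r + 1),
        ((genChoose ((r : ℝ) - 1/4) (r - m) * genChoose ((r : ℝ) - g + 1/4) m : ℝ) : ℂ) * z ^ m ∧
    Bpoly r g (1 - z) = ∑ m ∈ Finset.range (r - g + 1),
        ((genChoose ((r : ℝ) - g + 1/4) (r - g - m) * genChoose ((r : ℝ) - 1/4) m : ℝ) : ℂ) * z ^ m := by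
  have hgr : ((r - g : ℕ) : ℝ) = r - g := Nat.cast_sub (by omega)
  constructor
  · exact sum_range_genChoose_mul_genChoose_mul_neg_one_sub_pow (by rw [hgr]; ring) (by ring) z
  · exact sum_range_genChoose_mul_genChoose_mul_neg_one_sub_pow (by rw [hgr]; ring) (by ring) z
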